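/- arXiv:1705.04208 — 4 statements merged into one kernel-verified Lean document; each statement's English description precedes it below -/
import Mathlib

section
/- Let v₁, v̂₁ be linearly independent vectors in ℝ², let p, q, a, b be integers with p > 0 and b·q − a·p = 1, and set v₂ = q·v₁ + p·v̂₁ and v̂₂ = a·v₁ + b·v̂₁. Write θ₁ = ⟨v₁, v̂₁⟩/‖v₁‖², t₁ = ‖v̂₁ − θ₁·v₁‖, and θ₂ = ⟨v₂, v̂₂⟩/‖v₂‖². Then ⟨v₁, v₂⟩ = 0 if and only if θ₁ = −q/p; and in that case ‖v₂‖ = p·t₁ and θ₂ = b/p. -/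
noncomputable section

/-- The plane `ℝ²` with its standard inner product, norm and orientation. -/
abbrev E2 : Type := EuclideanSpace ℝ (Fin 2)

/-!
With `θ = ⟪v₁, w₁⟫ / ‖v₁‖²`, the vector `w₁ - θ • v₁` is the component of `w₁` orthogonal to `v₁`,
of length `t₁`. Since `⟪v₁, q • v₁ + p • w₁⟫ = ‖v₁‖² (q + p θ)`, orthogonality means `θ = -q/p`,
and then `v₂ = p • (w₁ - θ • v₁)` has length `p t₁`. Finally `v₂ ⊥ v₁` gives
`⟪v₂, a • v₁ + b • w₁⟫ = b ⟪v₂, w₁⟫ = b ‖v₂‖² / p`.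
-/

theorem LinearIndependent.smul_add_smul_ne_zero {R M : Type*} [Ring R] [AddCommGroup M]
    [Module R M] {x y : M} (h : LinearIndependent R ![x, y]) {s t : R} (hst : s ≠ 0 ∨ t ≠ 0) :
    s • x + t • y ≠ 0 := fun h0 ↦ by
  obtain ⟨rfl, rfl⟩ := LinearIndependent.pair_iff.mp h s t h0
  simp at hst

theorem smul_add_smul_eq_smul_sub_smul {K M : Type*} [Field K] [AddCommGroup M] [Module K M]
    {p q θ : K} (x y : M) (hp : p ≠ 0) (hθ : θ = -(q / p)) :
    q • x + p • y = p • (y - θ • x) := by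
  rw [hθ, smul_sub, smul_smul, mul_neg, mul_div_cancel₀ _ hp, neg_smul, sub_neg_eq_add, add_comm]

section InnerProductSpace

variable {E : Type*} [NormedAddCommGroup E] [InnerProductSpace ℝ E]

open scoped RealInnerProductSpace

theorem inner_smul_add_smul_eq_zero_iff {v w : E} {p q : ℝ} (hv : v ≠ 0) (hp : p ≠ 0) :
    ⟪v, q • v + p • w⟫ = 0 ↔ ⟪v, w⟫ / ‖v‖ ^ 2 = -(q / p) := by
  have hv2 : ‖v‖ ^ 2 ≠ 0 := by positivity
  rw [inner_add_right, real_inner_smul_right, real_inner_smul_right, real_inner_self_eq_norm_sq,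
    ← neg_div, div_eq_div_iff hv2 hp]
  constructor <;> intro h <;> linarith

theorem mul_inner_eq_norm_sq_of_eq_smul_sub_smul {u v w : E} {p θ : ℝ} (horth : ⟪u, v⟫ = 0)
    (hu : u = p • (w - θ • v)) : p * ⟪u, w⟫ = ‖u‖ ^ 2 := by
  calc p * ⟪u, w⟫ = ⟪u, p • (w - θ • v)⟫ := by
        rw [real_inner_smul_right, inner_sub_right, real_inner_smul_right, horth, mul_zero,
          sub_zero]
    _ = ‖u‖ ^ 2 := by rw [← hu, real_inner_self_eq_norm_sq]

theorem inner_smul_add_smul_div_norm_sq {u v w : E} {p θ : ℝ} (a b : ℝ) (hu0 : u ≠ 0)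
    (horth : ⟪u, v⟫ = 0) (hu : u = p • (w - θ • v)) :
    ⟪u, a • v + b • w⟫ / ‖u‖ ^ 2 = b / p := by
  have hpw := mul_inner_eq_norm_sq_of_eq_smul_sub_smul horth hu
  have hu2 : ‖u‖ ^ 2 ≠ 0 := by positivity
  have hp : p ≠ 0 := by rintro rfl; exact hu2 (by simpa using hpw.symm)
  rw [inner_add_right, real_inner_smul_right, real_inner_smul_right, horth,
    div_eq_div_iff hu2 hp, ← hpw]
  ring

end InnerProductSpace

theorem orthogonal_foliations_iff_general
    (v₁ w₁ : E2) (hli : LinearIndependent ℝ ![v₁, w₁])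
    (p q a b : ℤ) (hp : 0 < p)
    (v₂ w₂ : E2) (hv2 : v₂ = q • v₁ + p • w₁) (hw2 : w₂ = a • v₁ + b • w₁)
    (θ₁ t₁ θ₂ : ℝ)
    (hθ₁ : θ₁ = (inner ℝ v₁ w₁ : ℝ) / ‖v₁‖ ^ 2)
    (ht₁ : t₁ = ‖w₁ - θ₁ • v₁‖)
    (hθ₂ : θ₂ = (inner ℝ v₂ w₂ : ℝ) / ‖v₂‖ ^ 2) :
    ((inner ℝ v₁ v₂ : ℝ) = 0 ↔ θ₁ = -((q : ℝ) / (p : ℝ))) ∧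
    ((inner ℝ v₁ v₂ : ℝ) = 0 → ‖v₂‖ = (p : ℝ) * t₁ ∧ θ₂ = (b : ℝ) / (p : ℝ)) := by
  simp only [← Int.cast_smul_eq_zsmul ℝ] at hv2 hw2
  have hpR : (0 : ℝ) < p := by exact_mod_cast hp
  have hv₁ : v₁ ≠ 0 := by
    simpa using hli.smul_add_smul_ne_zero (s := (1 : ℝ)) (t := 0) (by simp)
  have hv₂ : v₂ ≠ 0 := hv2 ▸ hli.smul_add_smul_ne_zero (Or.inr hpR.ne')
  have horth_iff : inner ℝ v₁ v₂ = (0 : ℝ) ↔ θ₁ = -((q : ℝ) / p) := by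
    rw [hv2, hθ₁]; exact inner_smul_add_smul_eq_zero_iff hv₁ hpR.ne'
  refine ⟨horth_iff, fun horth ↦ ?_⟩
  have hv₂_eq : v₂ = (p : ℝ) • (w₁ - θ₁ • v₁) :=
    hv2.trans (smul_add_smul_eq_smul_sub_smul v₁ w₁ hpR.ne' (horth_iff.mp horth))
  constructor
  · rw [hv₂_eq, norm_smul, Real.norm_of_nonneg hpR.le, ht₁]
  · rw [hθ₂, hw2]
    exact inner_smul_add_smul_div_norm_sq _ _ hv₂ (real_inner_comm v₁ v₂ ▸ horth) hv₂_eq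

/-- orthogonality of `v₁` and `v₂ = q·v₁ + p·w₁` is equivalent to
`θ₁ = −q/p`, and in that case `‖v₂‖ = p·t₁` and `θ₂ = b/p`
(`wᵢ` plays the role of `v̂ᵢ`). -/
theorem orthogonal_foliations_iff
    (v₁ w₁ : E2) (hli : LinearIndependent ℝ ![v₁, w₁])
    (p q a b : ℤ) (hp : 0 < p) (hdet : b * q - a * p = 1)
    (v₂ w₂ : E2) (hv2 : v₂ = q • v₁ + p • w₁) (hw2 : w₂ = a • v₁ + b • w₁)
    (θ₁ t₁ θ₂ : ℝ)
    (hθ₁ : θ₁ = (inner ℝ v₁ w₁ : ℝ) / ‖v₁‖ ^ 2)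
    (ht₁ : t₁ = ‖w₁ - θ₁ • v₁‖)
    (hθ₂ : θ₂ = (inner ℝ v₂ w₂ : ℝ) / ‖v₂‖ ^ 2) :
    ((inner ℝ v₁ v₂ : ℝ) = 0 ↔ θ₁ = -((q : ℝ) / (p : ℝ))) ∧
    ((inner ℝ v₁ v₂ : ℝ) = 0 → ‖v₂‖ = (p : ℝ) * t₁ ∧ θ₂ = (b : ℝ) / (p : ℝ)) :=
  orthogonal_foliations_iff_general v₁ w₁ hli p q a b hp v₂ w₂ hv2 hw2 θ₁ t₁ θ₂ hθ₁ ht₁ hθ₂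
end
end

section
/- Let m, n be positive integers with gcd(m, n) = 1, and let G_{m,n} be the presented group ⟨a, b ∣ b·a·b⁻¹ = a⁻¹, aᵐ·b²ⁿ = 1⟩. Then G_{m,n} is a finite group of order 4·m·n. -/
/-- The relators of the prism manifold group
`G_{m,n} = ⟨a, b ∣ b·a·b⁻¹·a, aᵐ·b²ⁿ⟩`, with `a = of 0` and `b = of 1`. -/
def prismRels (m n : ℕ) : Set (FreeGroup (Fin 2)) :=
  {FreeGroup.of 1 * FreeGroup.of 0 * (FreeGroup.of 1)⁻¹ * FreeGroup.of 0,
   FreeGroup.of 0 ^ m * FreeGroup.of 1 ^ (2 * n)}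

/-!
Since `b` conjugates `a` to `a⁻¹` and commutes with `b ^ (2 * n) = a⁻ᵐ`, we get
`a ^ (2 * m) = 1` and `b ^ (2 * n) = a ^ m`; moving every `b` to the right then writes each
element as `aⁱ bʲ` with `0 ≤ i < 2m`, `0 ≤ j < 2n`, so `|G| ≤ 4mn`. Conversely `|G|` is divisible
by the order of every group generated by two elements satisfying the relations. For odd `m` the
dihedral group of order `2m` and the cyclic group of order `4n` are such quotients; for even `m`
(hence odd `n`) the dicyclic group of order `4m` and the cyclic group of order `n` are.
Coprimality of `m` and `n` makes `4mn` divide `|G|`.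
-/

theorem Int.exists_fin_eq_emod {N : ℕ} (hN : 0 < N) (k : ℤ) :
    ∃ r : Fin N, k % N = (r : ℕ) := by
  have := Int.emod_nonneg k (by omega : (N : ℤ) ≠ 0)
  have := Int.emod_lt_of_pos k (by omega : (0 : ℤ) < N)
  exact ⟨⟨(k % N).toNat, by omega⟩, by simp only; omega⟩

theorem ZMod.closure_ofAdd_one (N : ℕ) :
    Subgroup.closure {Multiplicative.ofAdd (1 : ZMod N)} = ⊤ := by
  rw [Subgroup.eq_top_iff']
  intro g
  obtain ⟨k, hk⟩ := ZMod.intCast_surjective g.toAdd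
  rw [← ofAdd_toAdd g, ← hk, ← zsmul_one, ofAdd_zsmul]
  exact Subgroup.zpow_mem _ (Subgroup.mem_closure_singleton_self _) k

namespace DihedralGroup

theorem closure_r_one_sr_zero {n : ℕ} :
    Subgroup.closure {r 1, sr 0} = (⊤ : Subgroup (DihedralGroup n)) := by
  have hr : ∀ i : ZMod n, r i ∈ Subgroup.closure {r 1, sr 0} := by
    intro i
    obtain ⟨k, rfl⟩ := ZMod.intCast_surjective i
    rw [← r_one_zpow]
    exact Subgroup.zpow_mem _ (Subgroup.subset_closure (Set.mem_insert _ _)) k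
  rw [Subgroup.eq_top_iff']
  rintro (i | i)
  · exact hr i
  · rw [← zero_add i, ← sr_mul_r]
    exact Subgroup.mul_mem _ (Subgroup.subset_closure (Set.mem_insert_of_mem _ rfl)) (hr i)

end DihedralGroup

namespace QuaternionGroup

theorem closure_a_one_xa_zero {n : ℕ} [NeZero n] :
    Subgroup.closure {a 1, xa 0} = (⊤ : Subgroup (QuaternionGroup n)) := by
  have ha : ∀ i : ZMod (2 * n), a i ∈ Subgroup.closure {a 1, xa 0} := by
    intro i
    obtain ⟨k, rfl⟩ := ZMod.natCast_zmod_surjective i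
    rw [← a_one_pow]
    exact Subgroup.pow_mem _ (Subgroup.subset_closure (Set.mem_insert _ _)) k
  rw [Subgroup.eq_top_iff']
  rintro (i | i)
  · exact ha i
  · rw [← zero_add i, ← xa_mul_a]
    exact Subgroup.mul_mem _ (Subgroup.subset_closure (Set.mem_insert_of_mem _ rfl)) (ha i)

end QuaternionGroup

abbrev PrismGroup (m n : ℕ) := PresentedGroup (prismRels m n)

namespace PrismGroup

variable {m n : ℕ}

def a : PrismGroup m n := PresentedGroup.of 0

def b : PrismGroup m n := PresentedGroup.of 1

theorem b_mul_a_mul_b_inv : (b * a * b⁻¹ : PrismGroup m n) = a⁻¹ :=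
  eq_inv_of_mul_eq_one_left <| PresentedGroup.one_of_mem (Set.mem_insert _ _)

theorem a_pow_mul_b_pow : (a ^ m * b ^ (2 * n) : PrismGroup m n) = 1 :=
  PresentedGroup.one_of_mem (Set.mem_insert_of_mem _ rfl)

theorem b_mul_a_zpow (i : ℤ) : (b * a ^ i : PrismGroup m n) = a ^ (-i) * b := by
  rw [← mul_inv_eq_iff_eq_mul, ← conj_zpow, b_mul_a_mul_b_inv, inv_zpow']

theorem b_pow_two_mul_eq_inv : (b ^ (2 * n) : PrismGroup m n) = (a ^ m)⁻¹ :=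
  eq_inv_of_mul_eq_one_right a_pow_mul_b_pow

theorem a_pow_two_mul : (a ^ (2 * m) : PrismGroup m n) = 1 := by
  have hcomm : (b * a ^ (m : ℤ) : PrismGroup m n) = a ^ (m : ℤ) * b := by
    have := ((Commute.refl (b : PrismGroup m n)).pow_right (2 * n)).inv_right.eq
    rwa [b_pow_two_mul_eq_inv, inv_inv, ← zpow_natCast] at this
  rw [b_mul_a_zpow, mul_left_inj, zpow_neg, zpow_natCast, inv_eq_iff_mul_eq_one, ← pow_add]
    at hcomm
  rw [two_mul, hcomm]

theorem b_pow_two_mul : (b ^ (2 * n) : PrismGroup m n) = a ^ m := by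
  rw [b_pow_two_mul_eq_inv, inv_eq_iff_mul_eq_one, ← pow_add, ← two_mul,
    a_pow_two_mul]

theorem b_inv_mul_a_zpow (i : ℤ) : (b⁻¹ * a ^ i : PrismGroup m n) = a ^ (-i) * b⁻¹ := by
  rw [inv_mul_eq_iff_eq_mul, ← mul_assoc, b_mul_a_zpow, neg_neg, mul_inv_cancel_right]

theorem exists_eq_a_zpow_mul_b_zpow (g : PrismGroup m n) : ∃ i j : ℤ, g = a ^ i * b ^ j := by
  have hg : g ∈ Subgroup.closure (Set.range PresentedGroup.of) := by
    rw [PresentedGroup.closure_range_of]; trivial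
  induction hg using Subgroup.closure_induction_left with
  | one => exact ⟨0, 0, by simp⟩
  | mul_left x hx y _ ih =>
    obtain ⟨k, rfl⟩ := hx
    obtain ⟨i, j, rfl⟩ := ih
    fin_cases k
    · exact ⟨1 + i, j, by rw [zpow_one_add, mul_assoc]; rfl⟩
    · refine ⟨-i, 1 + j, ?_⟩
      change b * _ = _
      rw [← mul_assoc, b_mul_a_zpow, zpow_one_add, mul_assoc]
  | inv_mul_cancel x hx y _ ih =>
    obtain ⟨k, rfl⟩ := hx
    obtain ⟨i, j, rfl⟩ := ih
    fin_cases k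
    · exact ⟨-1 + i, j, by rw [zpow_add, zpow_neg_one, mul_assoc]; rfl⟩
    · refine ⟨-i, -1 + j, ?_⟩
      change b⁻¹ * _ = _
      rw [← mul_assoc, b_inv_mul_a_zpow, zpow_add, zpow_neg_one, mul_assoc]

theorem b_zpow (j : ℤ) :
    (b ^ j : PrismGroup m n) = a ^ (m * (j / (2 * n))) * b ^ (j % (2 * n)) := by
  have hb : (b ^ (2 * n : ℤ) : PrismGroup m n) = a ^ (m : ℤ) := by exact_mod_cast b_pow_two_mul
  conv_lhs => rw [← Int.mul_ediv_add_emod j (2 * n)]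
  rw [zpow_add, zpow_mul, hb, ← zpow_mul]

def normalForm (p : Fin (2 * m) × Fin (2 * n)) : PrismGroup m n := a ^ (p.1 : ℕ) * b ^ (p.2 : ℕ)

theorem normalForm_surjective (hm : 0 < m) (hn : 0 < n) :
    Function.Surjective (normalForm (m := m) (n := n)) := by
  intro g
  obtain ⟨i, j, rfl⟩ := exists_eq_a_zpow_mul_b_zpow g
  obtain ⟨r, hr⟩ := Int.exists_fin_eq_emod (N := 2 * n) (by omega) j
  obtain ⟨s, hs⟩ := Int.exists_fin_eq_emod (N := 2 * m) (by omega) (i + m * (j / (2 * n)))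
  refine ⟨(s, r), ?_⟩
  have ha : (a ^ (2 * m : ℤ) : PrismGroup m n) = 1 := by exact_mod_cast a_pow_two_mul
  push_cast at hr hs
  rw [b_zpow, ← mul_assoc, ← zpow_add, zpow_eq_zpow_emod _ ha, hs, hr, zpow_natCast,
    zpow_natCast]
  rfl

theorem card_dvd_of_closure_eq_top {K : Type*} [Group K] {x y : K}
    (hconj : y * x * y⁻¹ = x⁻¹) (hrel : x ^ m * y ^ (2 * n) = 1)
    (hgen : Subgroup.closure {x, y} = ⊤) :
    Nat.card K ∣ Nat.card (PrismGroup m n) := by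
  let φ : PrismGroup m n →* K := PresentedGroup.toGroup (f := ![x, y]) <| by
    rintro r (rfl | rfl)
    · simpa using mul_eq_one_iff_eq_inv.mpr hconj
    · simpa using hrel
  have hrange : φ.range = ⊤ := by
    rw [eq_top_iff, ← hgen, Subgroup.closure_le, Set.insert_subset_iff, Set.singleton_subset_iff]
    exact ⟨⟨a, PresentedGroup.toGroup.of _⟩, ⟨b, PresentedGroup.toGroup.of _⟩⟩
  exact Subgroup.card_dvd_of_surjective φ (MonoidHom.range_eq_top.mp hrange)

open DihedralGroup in
theorem two_mul_m_dvd_card : 2 * m ∣ Nat.card (PrismGroup m n) := by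
  have hconj : sr 0 * r 1 * (sr 0)⁻¹ = (r 1 : DihedralGroup m)⁻¹ := by
    simp [inv_sr, inv_r, sr_mul_r, sr_mul_sr]
  have hrel : (r 1 : DihedralGroup m) ^ m * sr 0 ^ (2 * n) = 1 := by
    rw [r_one_pow_n, pow_mul, sq, sr_mul_self, one_pow, one_mul]
  simpa [DihedralGroup.nat_card] using
    card_dvd_of_closure_eq_top hconj hrel closure_r_one_sr_zero

open QuaternionGroup in
theorem four_mul_m_dvd_card_of_odd_n [NeZero m] (hn : Odd n) :
    4 * m ∣ Nat.card (PrismGroup m n) := by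
  have hconj : xa 0 * .a 1 * (xa 0)⁻¹ = (.a 1 : QuaternionGroup m)⁻¹ := by
    rw [mul_inv_eq_iff_eq_mul, eq_inv_mul_iff_mul_eq, xa_mul_a, a_mul_xa, zero_add, sub_self]
  have hrel : (.a 1 : QuaternionGroup m) ^ m * xa 0 ^ (2 * n) = 1 := by
    obtain ⟨t, rfl⟩ := hn
    rw [pow_mul, xa_sq, ← a_one_pow, ← pow_mul, ← pow_add,
      show m + m * (2 * t + 1) = 2 * m * (t + 1) by ring, pow_mul, a_one_pow_n, one_pow]
  simpa [Nat.card_eq_fintype_card, QuaternionGroup.card] using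
    card_dvd_of_closure_eq_top hconj hrel closure_a_one_xa_zero

theorem four_mul_n_dvd_card_of_odd_m (hm : Odd m) : 4 * n ∣ Nat.card (PrismGroup m n) := by
  let y : Multiplicative (ZMod (4 * n)) := .ofAdd 1
  have hy : y ^ (4 * n) = 1 := by
    simp only [y, ← ofAdd_nsmul, nsmul_one, ZMod.natCast_self, ofAdd_zero]
  have hconj : y * y ^ (2 * n) * y⁻¹ = (y ^ (2 * n))⁻¹ := by
    rw [mul_inv_cancel_comm, eq_inv_iff_mul_eq_one, ← pow_add, ← hy]
    congr 1
    ring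
  have hrel : (y ^ (2 * n)) ^ m * y ^ (2 * n) = 1 := by
    obtain ⟨t, rfl⟩ := hm
    rw [← pow_succ, ← pow_mul, show 2 * n * (2 * t + 1 + 1) = 4 * n * (t + 1) by ring,
      pow_mul, hy, one_pow]
  have hgen : Subgroup.closure {y ^ (2 * n), y} = ⊤ :=
    top_unique <| (ZMod.closure_ofAdd_one _).ge.trans <|
      Subgroup.closure_mono (Set.subset_insert _ _)
  have := card_dvd_of_closure_eq_top (m := m) hconj hrel hgen
  rwa [Nat.card_congr Multiplicative.toAdd, Nat.card_zmod] at this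

theorem n_dvd_card : n ∣ Nat.card (PrismGroup m n) := by
  have hconj : Multiplicative.ofAdd (1 : ZMod n) * 1 * (Multiplicative.ofAdd 1)⁻¹ = 1⁻¹ := by
    rw [mul_one, mul_inv_cancel, inv_one]
  have hrel : (1 : Multiplicative (ZMod n)) ^ m * Multiplicative.ofAdd 1 ^ (2 * n) = 1 := by
    rw [one_pow, one_mul, ← ofAdd_nsmul, nsmul_one, Nat.cast_mul, ZMod.natCast_self, mul_zero,
      ofAdd_zero]
  have hgen : Subgroup.closure {1, Multiplicative.ofAdd (1 : ZMod n)} = ⊤ :=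
    top_unique <| (ZMod.closure_ofAdd_one _).ge.trans <|
      Subgroup.closure_mono (Set.subset_insert _ _)
  have := card_dvd_of_closure_eq_top (m := m) hconj hrel hgen
  rwa [Nat.card_congr Multiplicative.toAdd, Nat.card_zmod] at this

theorem four_mul_mul_dvd_card (hm : 0 < m) (hmn : m.Coprime n) :
    4 * m * n ∣ Nat.card (PrismGroup m n) := by
  rcases Nat.even_or_odd m with hm_even | hm_odd
  · have hn_odd : Odd n := Nat.coprime_two_left.mp (hmn.coprime_dvd_left hm_even.two_dvd)
    have : NeZero m := ⟨hm.ne'⟩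
    have h4n : Nat.Coprime 4 n := Nat.Coprime.pow_left 2 (Nat.coprime_two_left.mpr hn_odd)
    exact (h4n.mul_left hmn).mul_dvd_of_dvd_of_dvd (four_mul_m_dvd_card_of_odd_n hn_odd)
      n_dvd_card
  · have hm4 : Nat.Coprime m 4 := Nat.Coprime.pow_right 2 (Nat.coprime_two_right.mpr hm_odd)
    rw [mul_comm 4, mul_assoc]
    exact (hm4.mul_right hmn).mul_dvd_of_dvd_of_dvd (dvd_of_mul_left_dvd two_mul_m_dvd_card)
      (four_mul_n_dvd_card_of_odd_m hm_odd)

end PrismGroup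

/-- for coprime positive integers `m, n`, the group
`G_{m,n} = ⟨a, b ∣ b·a·b⁻¹ = a⁻¹, aᵐ·b²ⁿ = 1⟩` is finite of order `4·m·n`. -/
theorem prismGroup_card (m n : ℕ) (hm : 0 < m) (hn : 0 < n) (hmn : Nat.Coprime m n) :
    Finite (PresentedGroup (prismRels m n)) ∧
      Nat.card (PresentedGroup (prismRels m n)) = 4 * m * n := by
  have hsurj := PrismGroup.normalForm_surjective hm hn
  have : Finite (PrismGroup m n) := Finite.of_surjective _ hsurj
  refine ⟨this, le_antisymm ?_ ?_⟩
  · calc Nat.card (PrismGroup m n) ≤ Nat.card (Fin (2 * m) × Fin (2 * n)) :=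
          Nat.card_le_card_of_surjective _ hsurj
      _ = 4 * m * n := by rw [Nat.card_prod, Nat.card_fin, Nat.card_fin]; ring
  · exact Nat.le_of_dvd Nat.card_pos (PrismGroup.four_mul_mul_dvd_card hm hmn)
end

section
/- Let m, n be positive integers with gcd(m, n) = 1, and let G_{m,n} be the presented group ⟨a, b ∣ b·a·b⁻¹ = a⁻¹, aᵐ·b²ⁿ = 1⟩. Then G_{m,n} is abelian (commutative) if and only if m = 1. -/
namespace PrismGroup

variable {m n : ℕ} {G : Type*} [Group G] {x y : G}

theorem lift_eq_one_of_mem (hconj : y * x * y⁻¹ * x = 1) (hpow : x ^ m * y ^ (2 * n) = 1) :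
    ∀ r ∈ prismRels m n, FreeGroup.lift ![x, y] r = 1 := by
  rintro r (rfl | rfl) <;> simpa

def lift (hconj : y * x * y⁻¹ * x = 1) (hpow : x ^ m * y ^ (2 * n) = 1) :
    PresentedGroup (prismRels m n) →* G :=
  PresentedGroup.toGroup (lift_eq_one_of_mem hconj hpow)

theorem commute_of_forall_commute (hconj : y * x * y⁻¹ * x = 1)
    (hpow : x ^ m * y ^ (2 * n) = 1)
    (hcomm : ∀ g h : PresentedGroup (prismRels m n), g * h = h * g) : Commute x y := by
  change x * y = y * x
  simpa [lift, PresentedGroup.toGroup.of] using congrArg (lift hconj hpow) (hcomm (.of 0) (.of 1))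

theorem of_zero_eq_inv_pow (n : ℕ) :
    (PresentedGroup.of 0 : PresentedGroup (prismRels 1 n)) = (.of 1 ^ (2 * n))⁻¹ := by
  rw [eq_inv_iff_mul_eq_one, ← pow_one (PresentedGroup.of 0)]
  exact PresentedGroup.one_of_mem (Set.mem_insert_of_mem _ rfl)

theorem isCyclic_one (n : ℕ) : IsCyclic (PresentedGroup (prismRels 1 n)) := by
  refine isCyclic_iff_exists_zpowers_eq_top.2 ⟨.of 1, eq_top_iff.2 fun x _ => ?_⟩
  refine PresentedGroup.generated_by _ _ (fun i => ?_) x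
  fin_cases i
  · simp [of_zero_eq_inv_pow, Subgroup.npow_mem_zpowers]
  · exact Subgroup.mem_zpowers _

end PrismGroup

namespace DihedralGroup

variable {m : ℕ}

theorem sr_mul_r_mul_inv_sr_mul_r (i j : ZMod m) : sr j * r i * (sr j)⁻¹ * r i = 1 := by
  simp [sr_mul_r, sr_mul_sr]

theorem r_one_pow_mul_sr_pow_two_mul (n : ℕ) (j : ZMod m) : r 1 ^ m * sr j ^ (2 * n) = 1 := by
  rw [r_one_pow_n, pow_mul, sq, sr_mul_self, one_pow, one_mul]

theorem commute_r_one_sr_iff (j : ZMod m) : Commute (r 1) (sr j) ↔ m ∣ 2 := by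
  rw [Commute, SemiconjBy, r_mul_sr, sr_mul_r, sr.injEq, ← ZMod.natCast_eq_zero_iff]
  constructor <;> intro h <;> linear_combination (exp := 1) -h

end DihedralGroup

namespace QuaternionGroup

variable {n : ℕ}

theorem xa_mul_a_mul_inv_xa_mul_a (i j : ZMod (2 * n)) : xa j * a i * (xa j)⁻¹ * a i = 1 := by
  have hinv : (xa j)⁻¹ = xa ((n : ZMod (2 * n)) + j) := rfl
  have h2n : (n : ZMod (2 * n)) + n = 0 := by
    rw [← two_mul]; exact_mod_cast ZMod.natCast_self _
  rw [hinv, xa_mul_a, xa_mul_xa, a_mul_a, one_def]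
  congr 1
  linear_combination h2n

theorem a_one_pow_mul_xa_pow_of_odd {k : ℕ} (hk : Odd k) (j : ZMod (2 * n)) :
    a 1 ^ n * xa j ^ (2 * k) = 1 := by
  obtain ⟨k, rfl⟩ := hk
  rw [show 2 * (2 * k + 1) = 4 * k + 2 by ring, pow_add, pow_mul, xa_pow_four, one_pow, one_mul,
    xa_sq, ← a_one_pow, ← pow_add, ← two_mul, a_one_pow_n]

theorem not_commute_a_one_xa_zero : ¬Commute (a 1) (xa 0 : QuaternionGroup 2) := by
  rw [Commute, SemiconjBy]
  decide

end QuaternionGroup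

theorem prismGroup_comm_iff_general (m n : ℕ) (hmn : Nat.Coprime m n) :
    (∀ x y : PresentedGroup (prismRels m n), x * y = y * x) ↔ m = 1 := by
  refine ⟨fun hcomm => ?_, ?_⟩
  · have hdvd : m ∣ 2 := (DihedralGroup.commute_r_one_sr_iff 0).1 <|
      PrismGroup.commute_of_forall_commute (DihedralGroup.sr_mul_r_mul_inv_sr_mul_r 1 0)
        (DihedralGroup.r_one_pow_mul_sr_pow_two_mul n 0) hcomm
    rcases (Nat.dvd_prime Nat.prime_two).1 hdvd with rfl | rfl
    · rfl
    · refine absurd ?_ QuaternionGroup.not_commute_a_one_xa_zero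
      exact PrismGroup.commute_of_forall_commute (QuaternionGroup.xa_mul_a_mul_inv_xa_mul_a 1 0)
        (QuaternionGroup.a_one_pow_mul_xa_pow_of_odd hmn.odd_of_left 0) hcomm
  · rintro rfl
    have := PrismGroup.isCyclic_one n
    exact mul_comm'

/-- for coprime positive integers `m, n`, the group
`G_{m,n} = ⟨a, b ∣ b·a·b⁻¹ = a⁻¹, aᵐ·b²ⁿ = 1⟩` is abelian if and only if `m = 1`. -/
theorem prismGroup_comm_iff (m n : ℕ) (hm : 0 < m) (hn : 0 < n) (hmn : Nat.Coprime m n) :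
    (∀ x y : PresentedGroup (prismRels m n), x * y = y * x) ↔ m = 1 :=
  prismGroup_comm_iff_general m n hmn
end

section
/- Let Λ be a lattice in ℝ², let A be an orthogonal 2×2 real matrix with det A = −1 such that A·Λ = Λ, and let b ∈ ℝ² satisfy A·b + b ∈ Λ. Assume that the induced map of the flat torus ℝ²/Λ is fixed-point free, i.e. A·x + b − x ∉ Λ for every x ∈ ℝ². Then Λ admits an orthogonal ℤ-basis adapted to A: there exist u, w ∈ Λ such that (u, w) is a ℤ-basis of Λ, ⟨u, w⟩ = 0, A·u = u and A·w = −w. In particular the flat torus ℝ²/Λ is a rectangular torus. -/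
noncomputable section

open Matrix

/-- The determinant of the `2×2` matrix with columns `v` and `w`. -/
def det2 (v w : E2) : ℝ := v 0 * w 1 - v 1 * w 0

/-- `(v, w)` is a `ℤ`-basis of the additive subgroup `Λ ⊆ ℝ²`. -/
def IsZBasis (Λ : AddSubgroup E2) (v w : E2) : Prop :=
  v ∈ Λ ∧ w ∈ Λ ∧ ∀ x ∈ Λ, ∃! c : ℤ × ℤ, x = c.1 • v + c.2 • w

/-- A lattice in `ℝ²`: the `ℤ`-span of an `ℝ`-basis of `ℝ²`. -/
def IsLattice (Λ : AddSubgroup E2) : Prop :=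
  ∃ v w : E2, LinearIndependent ℝ ![v, w] ∧ IsZBasis Λ v w

/-- The action of a `2×2` matrix on `ℝ²` (matrix–vector multiplication). -/
def matVec (A : Matrix (Fin 2) (Fin 2) ℝ) (x : E2) : E2 := WithLp.toLp 2 (A.mulVec x)

/-!
`A` acts as an orthogonal reflection `φ` of `ℝ²`. Its `±1`-eigenspaces are orthogonal lines, which
the discrete group `Λ` meets in infinite cyclic groups `ℤu` and `ℤw`; for `l ∈ Λ` we have
`l + φ l ∈ ℤu` and `l - φ l ∈ ℤw`. If `φ b + b = l + φ l` for some `l ∈ Λ`, then `(b - l) / 2` is a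
fixed point of the induced map of the torus, so `φ b + b ∈ ℤu` is not of this form. This forces
`l + φ l ∈ 2ℤu` for every `l ∈ Λ`, and then `l - (l + φ l) / 2 ∈ Λ` is a `(-1)`-eigenvector, so
`Λ = ℤu ⊕ ℤw`.
-/

open Module Submodule

theorem Matrix.isSymm_of_transpose_mul_self_eq_one_of_det_eq_neg_one {R : Type*} [CommRing R]
    {A : Matrix (Fin 2) (Fin 2) R} (hA : Aᵀ * A = 1) (hdet : A.det = -1) : A.IsSymm := by
  have h : Aᵀ = -A.adjugate :=
    calc Aᵀ = -(Aᵀ * (A.det • 1)) := by simp [hdet]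
      _ = -A.adjugate := by rw [← mul_adjugate, ← Matrix.mul_assoc, hA, Matrix.one_mul]
  ext i j
  have hij := congrFun₂ h i j
  fin_cases i <;> fin_cases j <;> simp_all [adjugate_fin_two]

theorem Matrix.toEuclideanLin_toEuclideanLin_of_mul_self_eq_one {𝕜 n : Type*} [RCLike 𝕜]
    [Fintype n] [DecidableEq n] {A : Matrix n n 𝕜} (hA : A * A = 1) (x : EuclideanSpace 𝕜 n) :
    toEuclideanLin A (toEuclideanLin A x) = x := by
  simp only [toLpLin_apply, mulVec_mulVec, hA, one_mulVec, WithLp.toLp_ofLp]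

section Plane

variable {K V : Type*} [Field K] [AddCommGroup V] [Module K V] {f : Module.End K V} {μ : K}

theorem Module.End.eigenspace_eq_span_singleton (hV : finrank K V = 2) (hdet : f.det ≠ μ ^ 2)
    {x : V} (hx0 : x ≠ 0) (hx : f x = μ • x) : f.eigenspace μ = K ∙ x := by
  refine le_antisymm (fun y hy => ?_) ((span_singleton_le_iff_mem _ _).2 (mem_eigenspace_iff.2 hx))
  by_contra hyx
  have hli : LinearIndependent K ![x, y] :=
    (LinearIndependent.pair_iff' hx0).2 fun a ha => hyx (mem_span_singleton.2 ⟨a, ha⟩)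
  let b := basisOfLinearIndependentOfCardEqFinrank hli (by simp [hV])
  have hf : f = μ • LinearMap.id := b.ext <| Fin.forall_fin_two.2
    ⟨by simpa [b] using hx, by simpa [b] using mem_eigenspace_iff.1 hy⟩
  exact hdet (by rw [hf, LinearMap.det_smul, LinearMap.det_id, hV, mul_one])

theorem Module.End.exists_apply_ne_smul_of_linearIndependent (hV : finrank K V = 2)
    (hdet : f.det ≠ μ ^ 2) {v : Fin 2 → V} (hv : LinearIndependent K v) :
    ∃ i, f (v i) ≠ μ • v i := by
  by_contra! h
  have hv₀ : v 0 ∈ K ∙ v 1 := by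
    rw [← f.eigenspace_eq_span_singleton hV hdet (hv.ne_zero 1) (h 1)]
    exact mem_eigenspace_iff.2 (h 0)
  obtain ⟨a, ha⟩ := mem_span_singleton.1 hv₀
  exact (linearIndependent_fin2.1 hv).2 a ha

end Plane

theorem Module.End.eigenspace_neg {R M : Type*} [CommRing R] [AddCommGroup M] [Module R M]
    (f : Module.End R M) (μ : R) : (-f).eigenspace μ = f.eigenspace (-μ) := by
  ext x
  simp [neg_eq_iff_eq_neg]

theorem IsLattice.discreteTopology {Λ : AddSubgroup E2} (hΛ : IsLattice Λ) :
    DiscreteTopology Λ := by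
  obtain ⟨v, w, hli, hv, hw, hcoord⟩ := hΛ
  let b := basisOfLinearIndependentOfCardEqFinrank hli (by simp)
  obtain rfl : Λ = (span ℤ (Set.range b)).toAddSubgroup := by
    ext x
    simp only [b, coe_basisOfLinearIndependentOfCardEqFinrank, Matrix.range_cons_cons_empty,
      mem_toAddSubgroup, mem_span_pair]
    refine ⟨fun hx => ?_, fun ⟨m, n, hx⟩ => hx ▸ Λ.add_mem (Λ.zsmul_mem hv m) (Λ.zsmul_mem hw n)⟩
    obtain ⟨c, hc, -⟩ := hcoord x hx
    exact ⟨c.1, c.2, hc.symm⟩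
  infer_instance

theorem isZBasis_of_linearIndependent {Λ : AddSubgroup E2} {u w : E2}
    (hli : LinearIndependent ℝ ![u, w]) (hu : u ∈ Λ) (hw : w ∈ Λ)
    (hspan : ∀ x ∈ Λ, ∃ m n : ℤ, m • u + n • w = x) : IsZBasis Λ u w := by
  refine ⟨hu, hw, fun x hx => ?_⟩
  obtain ⟨m, n, rfl⟩ := hspan x hx
  refine ⟨(m, n), rfl, fun c (hc : m • u + n • w = c.1 • u + c.2 • w) => ?_⟩
  obtain ⟨h₁, h₂⟩ := LinearIndependent.pair_iff.1 (hli.restrict_scalars' ℤ) (c.1 - m) (c.2 - n)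
    (by rw [sub_smul, sub_smul, sub_add_sub_comm, ← hc, sub_self])
  ext <;> omega

section DiscreteSubgroup

variable {E : Type*} [NormedAddCommGroup E] [NormedSpace ℝ E] (Λ : AddSubgroup E)
  [DiscreteTopology Λ]

theorem AddSubgroup.exists_inf_span_singleton_eq_zmultiples {g : E} (hg : g ≠ 0) :
    ∃ u, Λ ⊓ (ℝ ∙ g).toAddSubgroup = AddSubgroup.zmultiples u := by
  let f := (LinearMap.toSpanSingleton ℝ E g).toAddMonoidHom
  have : DiscreteTopology (Λ.comap f) :=
    DiscreteTopology.preimage_of_continuous_injective (Λ : Set E)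
      (continuous_id.smul continuous_const) (smul_left_injective ℝ hg)
  obtain ⟨t, ht⟩ := (Λ.comap f).isAddCyclic_iff_exists_zmultiples_eq_top.1
    (AddSubgroup.discrete_iff_addCyclic.2 this)
  refine ⟨t • g, ?_⟩
  rw [show t • g = f t from rfl, ← f.map_zmultiples, ht, AddSubgroup.map_comap_eq, inf_comm,
    LinearMap.span_singleton_eq_range]
  rfl

variable {Λ} {φ : Module.End ℝ E}

theorem AddSubgroup.exists_inf_eigenspace_eq_zmultiples (hE : finrank ℝ E = 2) {μ : ℝ}
    (hdet : φ.det ≠ μ ^ 2) {g : E} (hgΛ : g ∈ Λ) (hg0 : g ≠ 0) (hg : φ g = μ • g) :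
    ∃ u ≠ 0, Λ ⊓ (φ.eigenspace μ).toAddSubgroup = AddSubgroup.zmultiples u := by
  rw [φ.eigenspace_eq_span_singleton hE hdet hg0 hg]
  obtain ⟨u, hu⟩ := Λ.exists_inf_span_singleton_eq_zmultiples hg0
  refine ⟨u, ?_, hu⟩
  rintro rfl
  have : g ∈ Λ ⊓ (ℝ ∙ g).toAddSubgroup := ⟨hgΛ, mem_span_singleton_self g⟩
  exact hg0 (by simpa [hu] using this)

theorem AddSubgroup.exists_inf_eigenspace_one_eq_zmultiples (hE : finrank ℝ E = 2)
    {v : Fin 2 → E} (hv : LinearIndependent ℝ v) (hvΛ : ∀ i, v i ∈ Λ) (hφ : ∀ x, φ (φ x) = x)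
    (hdet : φ.det = -1) (hΛ : ∀ x ∈ Λ, φ x ∈ Λ) :
    ∃ u ≠ 0, Λ ⊓ (φ.eigenspace 1).toAddSubgroup = AddSubgroup.zmultiples u := by
  obtain ⟨i, hi⟩ := φ.exists_apply_ne_smul_of_linearIndependent hE (μ := -1)
    (by rw [hdet]; norm_num) hv
  refine Λ.exists_inf_eigenspace_eq_zmultiples hE (by rw [hdet]; norm_num)
    (Λ.add_mem (hvΛ i) (hΛ _ (hvΛ i))) (fun h => hi ?_) (by rw [one_smul, map_add, hφ, add_comm])
  rw [neg_one_smul, eq_neg_iff_add_eq_zero, add_comm, h]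

theorem AddSubgroup.exists_inf_eigenspace_neg_one_eq_zmultiples (hE : finrank ℝ E = 2)
    {v : Fin 2 → E} (hv : LinearIndependent ℝ v) (hvΛ : ∀ i, v i ∈ Λ) (hφ : ∀ x, φ (φ x) = x)
    (hdet : φ.det = -1) (hΛ : ∀ x ∈ Λ, φ x ∈ Λ) :
    ∃ w ≠ 0, Λ ⊓ (φ.eigenspace (-1)).toAddSubgroup = AddSubgroup.zmultiples w := by
  rw [← φ.eigenspace_neg 1]
  refine AddSubgroup.exists_inf_eigenspace_one_eq_zmultiples hE hv hvΛ (by simpa using hφ) ?_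
    fun x hx => Λ.neg_mem (hΛ x hx)
  rw [← neg_one_smul ℝ φ, LinearMap.det_smul, hE, hdet]
  norm_num

end DiscreteSubgroup

section Involution

variable {E : Type*} [AddCommGroup E] [Module ℝ E] {φ : Module.End ℝ E} {Λ : AddSubgroup E}
  {b : E}

theorem add_apply_ne_apply_add_of_forall_apply_add_sub_notMem
    (hfree : ∀ x, φ x + b - x ∉ Λ) {l : E} (hl : l ∈ Λ) : l + φ l ≠ φ b + b := by
  intro h
  apply hfree ((2 : ℝ)⁻¹ • (b - l))
  have hφb : φ b = l + φ l - b := eq_sub_of_add_eq h.symm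
  convert hl using 1
  rw [map_smul, map_sub, hφb]
  module

theorem exists_zsmul_add_zsmul_eq_of_forall_apply_add_sub_notMem (hφ : ∀ x, φ (φ x) = x)
    (hΛ : ∀ x ∈ Λ, φ x ∈ Λ) {u w : E}
    (hu : Λ ⊓ (φ.eigenspace 1).toAddSubgroup = AddSubgroup.zmultiples u)
    (hw : Λ ⊓ (φ.eigenspace (-1)).toAddSubgroup = AddSubgroup.zmultiples w)
    (hb : φ b + b ∈ Λ) (hfree : ∀ x, φ x + b - x ∉ Λ) {x : E} (hx : x ∈ Λ) :
    ∃ m n : ℤ, m • u + n • w = x := by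
  have mem_u : ∀ y ∈ Λ, φ y = y → ∃ m : ℤ, m • u = y := fun y hy hφy => by
    rw [← AddSubgroup.mem_zmultiples_iff, ← hu]
    exact ⟨hy, by simp [hφy]⟩
  have mem_w : ∀ y ∈ Λ, φ y = -y → ∃ n : ℤ, n • w = y := fun y hy hφy => by
    rw [← AddSubgroup.mem_zmultiples_iff, ← hw]
    exact ⟨hy, by simp [hφy]⟩
  obtain ⟨huΛ, hφu⟩ : u ∈ Λ ∧ φ u = u := by
    simpa using (hu.ge (AddSubgroup.mem_zmultiples u) : u ∈ Λ ⊓ _)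
  obtain ⟨k, hk⟩ := mem_u _ hb (by rw [map_add, hφ, add_comm])
  obtain ⟨m, hm⟩ := mem_u _ (Λ.add_mem hx (hΛ x hx)) (by rw [map_add, hφ, add_comm])
  have hsum : ∀ (l : E) (j : ℤ), (l + j • u) + φ (l + j • u) = l + φ l + (2 * j) • u := by
    intro l j
    rw [map_add, map_zsmul, hφu, mul_zsmul]
    abel
  -- `φ b + b = k • u` is not of the form `l + φ l`, but every multiple of `u` is once `m` is odd
  obtain ⟨j, rfl⟩ : Even m := by
    by_contra hodd
    obtain ⟨i, rfl | rfl⟩ := Int.even_or_odd' k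
    · refine add_apply_ne_apply_add_of_forall_apply_add_sub_notMem hfree
        (Λ.zsmul_mem huΛ i) ?_
      simpa [hk] using hsum 0 i
    · obtain ⟨j, rfl⟩ := Int.not_even_iff_odd.1 hodd
      refine add_apply_ne_apply_add_of_forall_apply_add_sub_notMem hfree
        (Λ.add_mem hx (Λ.zsmul_mem huΛ (i - j))) ?_
      rw [hsum, ← hm, ← hk, ← add_zsmul]
      ring_nf
  obtain ⟨n, hn⟩ := mem_w (x - j • u) (Λ.sub_mem hx (Λ.zsmul_mem huΛ j)) <| by
    rw [map_sub, map_zsmul, hφu, eq_sub_of_add_eq' hm.symm, add_zsmul]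
    abel
  exact ⟨j, n, by rw [hn]; abel⟩

end Involution

/-- if an orthogonal matrix `A` with `det A = −1` preserves a lattice
`Λ ⊆ ℝ²` and `x ↦ A·x + b` descends to a fixed-point-free isometry of the
flat torus `ℝ²/Λ`, then `Λ` has an orthogonal `ℤ`-basis `(u, w)` with `A·u = u` and
`A·w = −w`; in particular `ℝ²/Λ` is a rectangular torus. -/
theorem lattice_of_klein_involution_is_rectangular
    (Λ : AddSubgroup E2) (hΛ : IsLattice Λ)
    (A : Matrix (Fin 2) (Fin 2) ℝ) (hA : Aᵀ * A = 1) (hdet : A.det = -1)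
    (hAΛ : ∀ x : E2, x ∈ Λ ↔ matVec A x ∈ Λ)
    (b : E2) (hb : matVec A b + b ∈ Λ)
    (hfree : ∀ x : E2, matVec A x + b - x ∉ Λ) :
    ∃ u w : E2, IsZBasis Λ u w ∧ (inner ℝ u w : ℝ) = 0 ∧
      matVec A u = u ∧ matVec A w = -w := by
  have : DiscreteTopology Λ := hΛ.discreteTopology
  obtain ⟨v₁, v₂, hli, hv₁, hv₂, -⟩ := hΛ
  have hvΛ : ∀ i, ![v₁, v₂] i ∈ Λ := Fin.forall_fin_two.2 ⟨hv₁, hv₂⟩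
  have hsymm := A.isSymm_of_transpose_mul_self_eq_one_of_det_eq_neg_one hA hdet
  let φ : Module.End ℝ E2 := Matrix.toEuclideanLin A
  have hφ : ∀ x, φ (φ x) = x :=
    Matrix.toEuclideanLin_toEuclideanLin_of_mul_self_eq_one (by rwa [hsymm.eq] at hA)
  have hφdet : φ.det = -1 := by simp [φ, hdet]
  have hφΛ : ∀ x ∈ Λ, φ x ∈ Λ := fun x => (hAΛ x).1
  obtain ⟨u, hu0, hu⟩ := AddSubgroup.exists_inf_eigenspace_one_eq_zmultiples
    finrank_euclideanSpace_fin hli hvΛ hφ hφdet hφΛ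
  obtain ⟨w, hw0, hw⟩ := AddSubgroup.exists_inf_eigenspace_neg_one_eq_zmultiples
    finrank_euclideanSpace_fin hli hvΛ hφ hφdet hφΛ
  obtain ⟨huΛ, hφu⟩ : u ∈ Λ ⊓ (φ.eigenspace 1).toAddSubgroup := hu ▸ AddSubgroup.mem_zmultiples u
  obtain ⟨hwΛ, hφw⟩ : w ∈ Λ ⊓ (φ.eigenspace (-1)).toAddSubgroup :=
    hw ▸ AddSubgroup.mem_zmultiples w
  have hT : φ.IsSymmetric :=
    Matrix.isSymmetric_toEuclideanLin_iff.2 (Matrix.isHermitian_iff_isSymm.2 hsymm)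
  refine ⟨u, w, isZBasis_of_linearIndependent ?_ huΛ hwΛ fun x hx =>
      exists_zsmul_add_zsmul_eq_of_forall_apply_add_sub_notMem hφ hφΛ hu hw hb hfree hx,
    isOrtho_iff_inner_eq.1 (hT.orthogonalFamily_eigenspaces.isOrtho (by norm_num)) u hφu w hφw,
    (by simpa using hφu : φ u = u), (by simpa using hφw : φ w = -w)⟩
  refine φ.eigenvectors_linearIndependent' ![1, -1] (fun i j h => ?_) ![u, w]
    (Fin.forall_fin_two.2 ⟨⟨hφu, hu0⟩, ⟨hφw, hw0⟩⟩)
  fin_cases i <;> fin_cases j <;> norm_num at h <;> rfl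
end
end
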